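/- arXiv:1309.1527 — 10 statements merged into one kernel-verified Lean document; each statement's English description precedes it below -/
import Mathlib

section
/- The function B satisfies B''(w) ≥ 0 for all real w, i.e., B is convex on ℝ. -/
open Real Filter Set Topology

noncomputable def B : ℝ → ℝ := fun w => if w = 0 then 1 else w / (1 - Real.exp (-w))

noncomputable def Bc : ℂ → ℂ := fun z => if z = 0 then 1 else z / (1 - Complex.exp (-z))

lemma B_eq_re (w : ℝ) : B w = (Bc w).re := by
  unfold B Bc
  by_cases h : w = 0
  · simp [h]
  · have h' : (w : ℂ) ≠ 0 := by exact_mod_cast h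
    rw [if_neg h, if_neg h']
    have e1 : (1 : ℂ) - Complex.exp (-(w : ℂ)) = ((1 - Real.exp (-w) : ℝ) : ℂ) := by
      rw [← Complex.ofReal_neg, ← Complex.ofReal_exp]
      push_cast
      ring
    rw [e1, ← Complex.ofReal_div, Complex.ofReal_re]

lemma one_sub_exp_ne_zero {w : ℝ} (hw : w ≠ 0) : 1 - Real.exp (-w) ≠ 0 := by
  intro h
  have h1 : Real.exp (-w) = 1 := by linarith
  rw [Real.exp_eq_one_iff, neg_eq_zero] at h1
  exact hw h1

lemma cexp_ne_one {z : ℂ} (hz : z ∈ Metric.ball (0:ℂ) 1) (hz0 : z ≠ 0) :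
    (1 : ℂ) - Complex.exp (-z) ≠ 0 := by
  intro h
  have h1 : Complex.exp (-z) = 1 := by linear_combination -h
  obtain ⟨n, hn⟩ := Complex.exp_eq_one_iff.mp h1
  have hz1 : ‖z‖ < 1 := by simpa using hz
  have hnz : ‖(-z : ℂ)‖ = |(n:ℝ)| * (2 * Real.pi) := by
    rw [hn]
    simp [abs_of_pos Real.pi_pos, mul_comm, Complex.norm_intCast]
  rcases eq_or_ne n 0 with h0 | h0
  · rw [h0] at hn
    simp at hn
    exact hz0 hn
  · have h2 : (1:ℝ) ≤ |(n:ℝ)| := by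
      rw [← Int.cast_abs]
      exact_mod_cast Int.one_le_abs h0
    have h3 : (2:ℝ) * Real.pi ≤ |(n:ℝ)| * (2 * Real.pi) := by
      nlinarith [Real.pi_pos]
    rw [norm_neg] at hnz
    nlinarith [Real.pi_gt_three]

lemma Bc_eventuallyEq {z : ℂ} (hz : z ≠ 0) :
    Bc =ᶠ[𝓝 z] fun x => x / (1 - Complex.exp (-x)) := by
  filter_upwards [isOpen_ne.mem_nhds hz] with x hx
  simp [Bc, hx]

lemma Bc_analyticAt_ne {z : ℂ} (hz : z ≠ 0) (hden : (1:ℂ) - Complex.exp (-z) ≠ 0) :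
    AnalyticAt ℂ Bc z := by
  have h1 : AnalyticAt ℂ (fun x : ℂ => x / (1 - Complex.exp (-x))) z := by
    exact (analyticAt_id).div ((analyticAt_const).sub
      (analyticAt_cexp.comp (analyticAt_id.neg))) hden
  exact h1.congr (Bc_eventuallyEq hz).symm

lemma Bc_continuousAt_zero : ContinuousAt Bc 0 := by
  have hf : HasDerivAt (fun z : ℂ => 1 - Complex.exp (-z)) 1 0 := by
    have h1 : HasDerivAt (fun z : ℂ => Complex.exp (-z)) (-1) 0 := by
      simpa [Function.comp_def] using (Complex.hasDerivAt_exp (-0 : ℂ)).comp (0:ℂ) (hasDerivAt_neg (0:ℂ))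
    simpa using h1.const_sub 1
  have hslope : Tendsto (slope (fun z : ℂ => 1 - Complex.exp (-z)) 0) (𝓝[≠] 0) (𝓝 1) :=
    hasDerivAt_iff_tendsto_slope.mp hf
  have hinv : Tendsto (fun z => (slope (fun z : ℂ => 1 - Complex.exp (-z)) 0 z)⁻¹)
      (𝓝[≠] (0:ℂ)) (𝓝 1) := by
    simpa using hslope.inv₀ one_ne_zero
  have heq : ∀ z : ℂ, z ≠ 0 →
      Bc z = (slope (fun z : ℂ => 1 - Complex.exp (-z)) 0 z)⁻¹ := by
    intro z hz
    simp only [Bc, if_neg hz, slope_def_field]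
    rw [neg_zero, Complex.exp_zero, sub_zero]
    rw [inv_div]
    norm_num
  have htend : Tendsto Bc (𝓝[≠] (0:ℂ)) (𝓝 1) := by
    refine hinv.congr' ?_
    filter_upwards [self_mem_nhdsWithin] with z hz
    exact (heq z hz).symm
  have : ContinuousAt Bc 0 := by
    unfold ContinuousAt
    have h0 : Bc 0 = 1 := by simp [Bc]
    rw [h0, ← nhdsNE_sup_pure]
    exact htend.sup (by simpa [h0] using tendsto_pure_nhds Bc (0:ℂ))
  exact this

lemma Bc_analyticAt_zero : AnalyticAt ℂ Bc 0 := by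
  apply Complex.analyticAt_of_differentiable_on_punctured_nhds_of_continuousAt
  · have hmem : Metric.ball (0:ℂ) 1 ∈ 𝓝[≠] (0:ℂ) :=
      nhdsWithin_le_nhds (Metric.ball_mem_nhds _ one_pos)
    filter_upwards [hmem, self_mem_nhdsWithin] with z hz hz0
    exact (Bc_analyticAt_ne hz0 (cexp_ne_one hz hz0)).differentiableAt
  · exact Bc_continuousAt_zero

lemma Bc_analyticAt_real (w : ℝ) : AnalyticAt ℂ Bc ↑w := by
  rcases eq_or_ne w 0 with rfl | hw
  · simpa using Bc_analyticAt_zero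
  · apply Bc_analyticAt_ne (by exact_mod_cast hw)
    intro h
    apply one_sub_exp_ne_zero hw
    have h2 : ((1 - Real.exp (-w) : ℝ) : ℂ) = 0 := by
      rw [← h, ← Complex.ofReal_neg, ← Complex.ofReal_exp]
      push_cast
      ring
    exact_mod_cast h2

lemma B_contDiff : ContDiff ℝ (⊤ : ℕ∞) B := by
  rw [contDiff_iff_contDiffAt]
  intro w
  have h : B = fun w : ℝ => Complex.reCLM (Bc (Complex.ofRealCLM w)) :=
    funext fun w => B_eq_re w
  rw [h]
  exact Complex.reCLM.contDiff.contDiffAt.comp _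
    ((((Bc_analyticAt_real w).contDiffAt).restrict_scalars ℝ).comp _
      Complex.ofRealCLM.contDiff.contDiffAt)

noncomputable def B1 : ℝ → ℝ := fun w =>
  (1 * (1 - Real.exp (-w)) - w * Real.exp (-w)) / (1 - Real.exp (-w)) ^ 2

noncomputable def B2 : ℝ → ℝ := fun w =>
  (w * Real.exp (-w) * ((1 - Real.exp (-w)) ^ 2) -
    (1 * (1 - Real.exp (-w)) - w * Real.exp (-w)) *
      (2 * (1 - Real.exp (-w)) ^ 1 * Real.exp (-w))) / ((1 - Real.exp (-w)) ^ 2) ^ 2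

lemma hasDerivAt_den (w : ℝ) :
    HasDerivAt (fun x : ℝ => 1 - Real.exp (-x)) (Real.exp (-w)) w := by
  have h1 : HasDerivAt (fun x : ℝ => Real.exp (-x)) (-Real.exp (-w)) w := by
    simpa [Function.comp_def] using (Real.hasDerivAt_exp (-w)).comp w (hasDerivAt_neg w)
  simpa using h1.const_sub 1

lemma hasDerivAt_B {w : ℝ} (hw : w ≠ 0) : HasDerivAt B (B1 w) w := by
  have hden := one_sub_exp_ne_zero hw
  have h : HasDerivAt (fun x : ℝ => x / (1 - Real.exp (-x))) (B1 w) w :=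
    (hasDerivAt_id w).div (hasDerivAt_den w) hden
  apply h.congr_of_eventuallyEq
  filter_upwards [isOpen_ne.mem_nhds hw] with x hx
  simp [B, hx]

lemma deriv_B {w : ℝ} (hw : w ≠ 0) : deriv B w = B1 w := (hasDerivAt_B hw).deriv

lemma hasDerivAt_B1 {w : ℝ} (hw : w ≠ 0) : HasDerivAt B1 (B2 w) w := by
  have hden := one_sub_exp_ne_zero hw
  have hE : HasDerivAt (fun x : ℝ => Real.exp (-x)) (-Real.exp (-w)) w := by
    simpa [Function.comp_def] using (Real.hasDerivAt_exp (-w)).comp w (hasDerivAt_neg w)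
  have hN : HasDerivAt (fun x : ℝ => 1 * (1 - Real.exp (-x)) - x * Real.exp (-x))
      (w * Real.exp (-w)) w := by
    have h1 : HasDerivAt (fun x : ℝ => x * Real.exp (-x))
        (1 * Real.exp (-w) + w * -Real.exp (-w)) w := (hasDerivAt_id w).mul hE
    have h2 := ((hasDerivAt_den w).const_mul 1).sub h1
    exact h2.congr_deriv (by ring)
  have hM : HasDerivAt (fun x : ℝ => (1 - Real.exp (-x)) ^ 2)
      (2 * (1 - Real.exp (-w)) ^ 1 * Real.exp (-w)) w := by
    simpa [Pi.pow_def] using (hasDerivAt_den w).pow 2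
  have hMne : (1 - Real.exp (-w)) ^ 2 ≠ 0 := pow_ne_zero 2 hden
  exact hN.div hM hMne

lemma iteratedDeriv_two_B {w : ℝ} (hw : w ≠ 0) : iteratedDeriv 2 B w = B2 w := by
  rw [iteratedDeriv_succ, iteratedDeriv_one]
  have h : deriv B =ᶠ[𝓝 w] B1 := by
    filter_upwards [isOpen_ne.mem_nhds hw] with x hx
    exact deriv_B hx
  rw [h.deriv_eq]
  exact (hasDerivAt_B1 hw).deriv

noncomputable def phi : ℝ → ℝ := fun x => (x - 2) + (x + 2) * Real.exp (-x)

lemma hasDerivAt_phi (x : ℝ) : HasDerivAt phi (1 - (x + 1) * Real.exp (-x)) x := by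
  have hE : HasDerivAt (fun x : ℝ => Real.exp (-x)) (-Real.exp (-x)) x := by
    simpa [Function.comp_def] using (Real.hasDerivAt_exp (-x)).comp x (hasDerivAt_neg x)
  have h1 : HasDerivAt (fun y : ℝ => (y + 2) * Real.exp (-y))
      (1 * Real.exp (-x) + (x + 2) * -Real.exp (-x)) x :=
    ((hasDerivAt_id x).add_const 2).mul hE
  have h2 := ((hasDerivAt_id x).sub_const 2).add h1
  exact h2.congr_deriv (by ring)

lemma phi_deriv_nonneg (x : ℝ) : 0 ≤ 1 - (x + 1) * Real.exp (-x) := by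
  have h1 : x + 1 ≤ Real.exp x := Real.add_one_le_exp x
  have h2 : (x + 1) * Real.exp (-x) ≤ Real.exp x * Real.exp (-x) :=
    mul_le_mul_of_nonneg_right h1 (Real.exp_pos _).le
  rw [← Real.exp_add] at h2
  simp at h2
  linarith

lemma phi_monotone : Monotone phi := by
  apply monotone_of_deriv_nonneg
  · exact fun x => (hasDerivAt_phi x).differentiableAt
  · intro x
    rw [(hasDerivAt_phi x).deriv]
    exact phi_deriv_nonneg x

lemma phi_zero : phi 0 = 0 := by simp [phi]

lemma B2_eq {w : ℝ} (hw : w ≠ 0) :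
    B2 w = Real.exp (-w) * phi w / (1 - Real.exp (-w)) ^ 3 := by
  have hden := one_sub_exp_ne_zero hw
  unfold B2 phi
  field_simp
  ring

lemma B2_nonneg {w : ℝ} (hw : w ≠ 0) : 0 ≤ B2 w := by
  rw [B2_eq hw]
  have hE : 0 < Real.exp (-w) := Real.exp_pos _
  rcases lt_or_gt_of_ne hw with hneg | hpos
  · -- w < 0 : exp(-w) > 1, phi w ≤ 0
    have h1 : 1 < Real.exp (-w) := by
      rw [Real.one_lt_exp_iff]
      linarith
    have h2 : phi w ≤ 0 := phi_zero ▸ phi_monotone hneg.le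
    rw [div_nonneg_iff]
    right
    constructor
    · exact mul_nonpos_of_nonneg_of_nonpos hE.le h2
    · have h3 : 1 - Real.exp (-w) < 0 := by linarith
      nlinarith [sq_nonneg (1 - Real.exp (-w))]
  · -- w > 0 : exp(-w) < 1, phi w ≥ 0
    have h1 : Real.exp (-w) < 1 := by
      rw [Real.exp_lt_one_iff]
      linarith
    have h2 : 0 ≤ phi w := phi_zero ▸ phi_monotone hpos.le
    apply div_nonneg
    · exact mul_nonneg hE.le h2
    · have h3 : 0 < 1 - Real.exp (-w) := by linarith
      positivity

theorem B_second_deriv_nonneg_and_convex :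
    (∀ w : ℝ, 0 ≤ iteratedDeriv 2 B w) ∧ ConvexOn ℝ Set.univ B := by
  have hBt : ContDiff ℝ ((⊤ : ℕ∞) : WithTop ℕ∞) B := B_contDiff.of_le (mod_cast le_top)
  have hd1 := contDiff_infty_iff_deriv.mp hBt
  have hd2 := contDiff_infty_iff_deriv.mp hd1.2
  have hmain : ∀ w : ℝ, 0 ≤ iteratedDeriv 2 B w := by
    intro w
    rcases eq_or_ne w 0 with rfl | hw
    · -- continuity argument at 0
      have hcont : Continuous (iteratedDeriv 2 B) := by
        rw [iteratedDeriv_succ, iteratedDeriv_one]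
        exact hd2.2.continuous
      have htends : Tendsto (iteratedDeriv 2 B) (𝓝[≠] (0:ℝ)) (𝓝 (iteratedDeriv 2 B 0)) :=
        (hcont.continuousAt.tendsto).mono_left nhdsWithin_le_nhds
      apply ge_of_tendsto htends
      filter_upwards [self_mem_nhdsWithin] with x hx
      rw [iteratedDeriv_two_B hx]
      exact B2_nonneg hx
    · rw [iteratedDeriv_two_B hw]
      exact B2_nonneg hw
  refine ⟨hmain, ?_⟩
  apply convexOn_of_deriv2_nonneg convex_univ B_contDiff.continuous.continuousOn
    (hd1.1.differentiableOn) (hd2.1.differentiableOn)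
  intro x _
  rw [← iteratedDeriv_eq_iterate]
  exact hmain x
end

section
/- For all λ ≥ 0 and w ≥ 0, one has B(λ+w) - B(λ) ≥ B(w) - B(0), where B(w) = w/(1-e^{-w}) (with B(0)=1). -/
/-! With `a = exp (-λ)` and `b = exp (-w)`, clearing denominators writes the defect
`B (λ + w) - B λ - B w + B 0` as
`((1 - a² - 2λa)(1 - b)² + (1 - b² - 2wb)(1 - a)²) / (2 (1 - ab)(1 - a)(1 - b))`,
and both numerator terms are nonnegative because `x ≤ sinh x` for `x ≥ 0`. -/

open Real

lemma B_zero : B 0 = 1 := if_pos rfl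

lemma B_of_ne_zero {w : ℝ} (hw : w ≠ 0) : B w = w / (1 - exp (-w)) := if_neg hw

lemma two_mul_mul_exp_neg_le {x : ℝ} (hx : 0 ≤ x) : 2 * x * exp (-x) ≤ 1 - exp (-x) ^ 2 := by
  have h : x ≤ (exp x - exp (-x)) / 2 := sinh_eq x ▸ self_le_sinh_iff.mpr hx
  have hexp : exp x * exp (-x) = 1 := by rw [← exp_add, add_neg_cancel, exp_zero]
  nlinarith [mul_le_mul_of_nonneg_right h (exp_pos (-x)).le]

lemma div_one_sub_add_div_one_sub_le {a b s t : ℝ} (ha₀ : 0 ≤ a) (ha₁ : a < 1)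
    (hb₁ : b < 1) (hs : 2 * s * a ≤ 1 - a ^ 2) (ht : 2 * t * b ≤ 1 - b ^ 2) :
    s / (1 - a) + t / (1 - b) ≤ (s + t) / (1 - a * b) + 1 := by
  have ha : 0 < 1 - a := by linarith
  have hb : 0 < 1 - b := by linarith
  have hab : 0 < 1 - a * b := by nlinarith
  have defect_eq : (s + t) / (1 - a * b) + 1 - (s / (1 - a) + t / (1 - b)) =
      ((1 - a ^ 2 - 2 * s * a) * (1 - b) ^ 2 + (1 - b ^ 2 - 2 * t * b) * (1 - a) ^ 2) /
        (2 * ((1 - a * b) * (1 - a) * (1 - b))) := by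
    field_simp
    ring
  have defect_nonneg : 0 ≤ (s + t) / (1 - a * b) + 1 - (s / (1 - a) + t / (1 - b)) := by
    rw [defect_eq]
    apply div_nonneg
    · nlinarith [sq_nonneg (1 - a), sq_nonneg (1 - b)]
    · positivity
  linarith

theorem B_superadditive_shift (lam w : ℝ) (hlam : 0 ≤ lam) (hw : 0 ≤ w) :
    B w - B 0 ≤ B (lam + w) - B lam := by
  rcases hw.eq_or_lt with rfl | hw₀
  · simp
  rcases hlam.eq_or_lt with rfl | hlam₀
  · simp
  rw [B_zero, B_of_ne_zero hw₀.ne', B_of_ne_zero hlam₀.ne', B_of_ne_zero (by positivity),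
    neg_add, exp_add]
  have key := div_one_sub_add_div_one_sub_le (exp_pos (-lam)).le
    (exp_lt_one_iff.mpr (by linarith)) (exp_lt_one_iff.mpr (by linarith))
    (two_mul_mul_exp_neg_le hlam) (two_mul_mul_exp_neg_le hw)
  linarith
end

section
/- For all λ ≥ 0 and w ≤ 0, one has B(λ) - B(λ+w) ≥ B(0) - B(w) ≥ 0, where B(w) = w/(1-e^{-w}) (with B(0)=1). -/
/-!
Since `B x - B (-x) = x`, the even part of `B` is `φ x = B x - x / 2 = (x / 2) coth (x / 2)`.
It is at least `φ 0 = 1` and increasing in `|x|`, because `t coth t` is increasing on `(0, ∞)`.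
In terms of `φ` the first inequality reads `1 + φ (λ + w) ≤ φ λ + φ w`, which holds since
`|λ + w| ≤ max λ (-w)`. The second one is `1 - w ≤ exp (-w)`.
-/

open Real Set

lemma sinh_le_mul_cosh {t : ℝ} (ht : 0 ≤ t) : sinh t ≤ t * cosh t := by
  rcases ht.eq_or_lt with rfl | ht
  · simp
  obtain ⟨c, hc, hslope⟩ := exists_deriv_eq_slope sinh ht continuous_sinh.continuousOn
    differentiable_sinh.differentiableOn
  rw [Real.deriv_sinh, sinh_zero, sub_zero, sub_zero, eq_div_iff ht.ne'] at hslope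
  have hcosh : cosh c ≤ cosh t := cosh_le_cosh.2 (abs_le_abs_of_nonneg hc.1.le hc.2.le)
  nlinarith

lemma one_le_mul_cosh_div_sinh {t : ℝ} (ht : 0 < t) : 1 ≤ t * cosh t / sinh t := by
  rw [one_le_div (sinh_pos_iff.2 ht)]
  exact sinh_le_mul_cosh ht.le

lemma strictMonoOn_mul_cosh_div_sinh : StrictMonoOn (fun t => t * cosh t / sinh t) (Ioi 0) := by
  have hderiv : ∀ t ∈ Ioi (0 : ℝ), HasDerivAt (fun t => t * cosh t / sinh t)
      ((sinh t * cosh t - t) / sinh t ^ 2) t := by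
    intro t ht
    refine (((hasDerivAt_id' t).mul (hasDerivAt_cosh t)).div (hasDerivAt_sinh t)
      (sinh_pos_iff.2 ht).ne').congr_deriv ?_
    simp only [Pi.mul_apply]
    congr 1
    linear_combination (-t) * cosh_sq t
  refine strictMonoOn_of_deriv_pos (convex_Ioi 0)
    (fun t ht => (hderiv t ht).continuousAt.continuousWithinAt) fun t ht => ?_
  rw [interior_Ioi] at ht
  rw [(hderiv t ht).deriv]
  have h2t : 2 * t < sinh (2 * t) := self_lt_sinh_iff.2 (by linarith [mem_Ioi.1 ht])
  rw [sinh_two_mul] at h2t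
  have : 0 < sinh t := sinh_pos_iff.2 ht
  exact div_pos (by linarith) (by positivity)

noncomputable def BEven (x : ℝ) : ℝ := B x - x / 2

lemma BEven_zero : BEven 0 = 1 := by simp [BEven, B]

lemma BEven_eq {x : ℝ} (hx : x ≠ 0) : BEven x = x / 2 * cosh (x / 2) / sinh (x / 2) := by
  have ha : 0 < exp (x / 2) := exp_pos _
  have ha1 : exp (x / 2) ≠ 1 := by simpa using hx
  have hsq : exp (-x) = (exp (x / 2))⁻¹ ^ 2 := by rw [← exp_neg, ← exp_nat_mul]; ring_nf
  have hden : exp (x / 2) ^ 2 - 1 ≠ 0 := by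
    rw [sub_ne_zero, ne_eq, pow_eq_one_iff_of_nonneg ha.le two_ne_zero]; exact ha1
  simp only [BEven, B, if_neg hx, sinh_eq, cosh_eq, exp_neg, hsq]
  field_simp
  ring

lemma BEven_neg (x : ℝ) : BEven (-x) = BEven x := by
  rcases eq_or_ne x 0 with rfl | hx
  · simp
  rw [BEven_eq hx, BEven_eq (neg_ne_zero.2 hx), neg_div, sinh_neg, cosh_neg]
  ring

lemma BEven_abs (x : ℝ) : BEven |x| = BEven x := by
  rcases abs_choice x with h | h <;> rw [h]
  exact BEven_neg x

lemma one_le_BEven (x : ℝ) : 1 ≤ BEven x := by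
  rcases eq_or_ne x 0 with rfl | hx
  · rw [BEven_zero]
  rw [← BEven_abs, BEven_eq (abs_ne_zero.2 hx)]
  exact one_le_mul_cosh_div_sinh (by positivity)

lemma BEven_le_of_abs_le {x y : ℝ} (h : |x| ≤ |y|) : BEven x ≤ BEven y := by
  rw [← BEven_abs x, ← BEven_abs y]
  rcases (abs_nonneg x).eq_or_lt with hx | hx
  · rw [← hx, BEven_zero]
    exact one_le_BEven _
  rw [BEven_eq hx.ne', BEven_eq (hx.trans_le h).ne']
  exact strictMonoOn_mul_cosh_div_sinh.monotoneOn (half_pos hx) (half_pos (hx.trans_le h))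
    (by linarith)

lemma one_add_BEven_add_le {a b : ℝ} (ha : 0 ≤ a) (hb : b ≤ 0) :
    1 + BEven (a + b) ≤ BEven a + BEven b := by
  rcases le_total a (-b) with hab | hab
  · have := BEven_le_of_abs_le (x := a + b) (y := b) (by
      rw [abs_of_nonpos hb, abs_le]; constructor <;> linarith)
    linarith [one_le_BEven a]
  · have := BEven_le_of_abs_le (x := a + b) (y := a) (by
      rw [abs_of_nonneg ha, abs_le]; constructor <;> linarith)
    linarith [one_le_BEven b]

lemma B_le_one_of_nonpos {w : ℝ} (hw : w ≤ 0) : B w ≤ 1 := by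
  rcases hw.eq_or_lt with rfl | hw
  · simp [B]
  have hden : 1 - exp (-w) < 0 := by
    rw [sub_neg, one_lt_exp_iff]
    linarith
  simp only [B, if_neg hw.ne]
  rw [div_le_one_of_neg hden]
  linarith [add_one_le_exp (-w)]

theorem B_shift_ineq_neg (lam w : ℝ) (hlam : 0 ≤ lam) (hw : w ≤ 0) :
    B 0 - B w ≤ B lam - B (lam + w) ∧ 0 ≤ B 0 - B w := by
  have hB0 : B 0 = 1 := by simp [B]
  have hkey : 1 + BEven (lam + w) ≤ BEven lam + BEven w := one_add_BEven_add_le hlam hw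
  unfold BEven at hkey
  exact ⟨by linarith, by linarith [B_le_one_of_nonpos hw]⟩
end

section
/- Define g(λ,w) = e^λ b(λ+w) - e^λ b(λ) - b(w) + b(0), where b(w) = 1/(1+e^w). For all λ ≥ 0 and w ≥ 0, g(λ,w) ≤ 0. -/
/-! With `a = exp lam` and `c = exp w`, clearing denominators turns `g` into the rational function
`-(a - 1) (c - 1) (a (c + 2) + 1) / (2 (1 + a c) (1 + a) (1 + c))`: `g` vanishes on both axes
`lam = 0` and `w = 0`, and the remaining factor is positive. -/

noncomputable def b : ℝ → ℝ := fun w => 1 / (1 + Real.exp w)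

open Real

theorem g_eq (lam w : ℝ) :
    exp lam * b (lam + w) - exp lam * b lam - b w + b 0 =
      -((exp lam - 1) * (exp w - 1) * (exp lam * (exp w + 2) + 1)) /
        (2 * (1 + exp lam * exp w) * (1 + exp lam) * (1 + exp w)) := by
  simp only [b, exp_add, exp_zero]
  field_simp
  ring

theorem g_nonpos (lam w : ℝ) (hlam : 0 ≤ lam) (hw : 0 ≤ w) :
    Real.exp lam * b (lam + w) - Real.exp lam * b lam - b w + b 0 ≤ 0 := by
  rw [g_eq]
  have hlam' : 0 ≤ exp lam - 1 := sub_nonneg.2 (one_le_exp hlam)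
  have hw' : 0 ≤ exp w - 1 := sub_nonneg.2 (one_le_exp hw)
  exact div_nonpos_of_nonpos_of_nonneg
    (neg_nonpos.2 (mul_nonneg (mul_nonneg hlam' hw') (by positivity))) (by positivity)
end

section
/- Define g(λ,w) = e^λ b(λ+w) - e^λ b(λ) - b(w) + b(0), where b(w) = 1/(1+e^w). For all λ ≥ 0 and w ≤ 0, g(λ,w) ≥ 0. -/
lemma div_one_add_mul_sub_eq {x y : ℝ} (hx : 0 ≤ x) (hy : 0 ≤ y) :
    x / (1 + x * y) - x / (1 + x) - 1 / (1 + y) + 1 / 2 =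
      (1 - y) * (x - 1) * (x * (y + 2) + 1) / (2 * (1 + x * y) * (1 + x) * (1 + y)) := by
  have hxy : 1 + x * y ≠ 0 := by positivity
  have hx1 : 1 + x ≠ 0 := by positivity
  have hy1 : 1 + y ≠ 0 := by positivity
  field_simp
  ring

lemma div_one_add_mul_sub_nonneg {x y : ℝ} (hx : 1 ≤ x) (hy₀ : 0 ≤ y) (hy₁ : y ≤ 1) :
    0 ≤ x / (1 + x * y) - x / (1 + x) - 1 / (1 + y) + 1 / 2 := by
  rw [div_one_add_mul_sub_eq (by linarith) hy₀]
  have h₁ : 0 ≤ 1 - y := by linarith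
  have h₂ : 0 ≤ x - 1 := by linarith
  have h₃ : 0 ≤ x := by linarith
  positivity

theorem g_nonneg (lam w : ℝ) (hlam : 0 ≤ lam) (hw : w ≤ 0) :
    0 ≤ Real.exp lam * b (lam + w) - Real.exp lam * b lam - b w + b 0 := by
  have key := div_one_add_mul_sub_nonneg (Real.one_le_exp hlam) (Real.exp_nonneg w)
    (Real.exp_le_one_iff.mpr hw)
  simp only [b, Real.exp_add, Real.exp_zero]
  convert key using 1
  ring
end

section
/- The function x ↦ 1/(e^x - 1) - x/(e^x - 1)² is decreasing on (0,∞). -/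
/-! The derivative is `(1 + 2x eˣ - e²ˣ) / (eˣ - 1)³`. Its numerator is negative for `x > 0`:
dividing by `eˣ` turns `2x eˣ < e²ˣ - 1` into `x < sinh x`. -/

open Real Set

lemma two_mul_mul_exp_lt_exp_sq_sub_one {x : ℝ} (hx : 0 < x) :
    2 * x * exp x < exp x ^ 2 - 1 := by
  have hsinh : 2 * x < exp x - exp (-x) := by
    have := self_lt_sinh_iff.2 hx
    rw [sinh_eq] at this
    linarith
  calc 2 * x * exp x < (exp x - exp (-x)) * exp x := mul_lt_mul_of_pos_right hsinh (exp_pos x)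
    _ = exp x ^ 2 - 1 := by rw [sub_mul, ← exp_add (-x), neg_add_cancel, exp_zero, sq]

lemma hasDerivAt_one_div_exp_sub_one_sub_div_sq {x : ℝ} (hx : exp x - 1 ≠ 0) :
    HasDerivAt (fun x => 1 / (exp x - 1) - x / (exp x - 1) ^ 2)
      ((1 + 2 * x * exp x - exp x ^ 2) / (exp x - 1) ^ 3) x := by
  have hu : HasDerivAt (fun x => exp x - 1) (exp x) x := (hasDerivAt_exp x).sub_const 1
  refine (((hasDerivAt_const x (1 : ℝ)).div hu hx).fun_sub
    ((hasDerivAt_id' x).div (hu.fun_pow 2) (pow_ne_zero 2 hx))).congr_deriv ?_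
  field_simp
  ring

theorem decreasing_aux :
    StrictAntiOn (fun x : ℝ => 1 / (Real.exp x - 1) - x / (Real.exp x - 1) ^ 2)
      (Set.Ioi 0) := by
  have hpos : ∀ x ∈ Ioi (0 : ℝ), 0 < exp x - 1 := fun x hx => sub_pos.2 (one_lt_exp_iff.2 hx)
  have hderiv x (hx : x ∈ Ioi (0 : ℝ)) :=
    hasDerivAt_one_div_exp_sub_one_sub_div_sq (hpos x hx).ne'
  refine strictAntiOn_of_hasDerivWithinAt_neg (convex_Ioi 0)
    (fun x hx => (hderiv x hx).continuousAt.continuousWithinAt)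
    (fun x hx => (hderiv x (interior_subset hx)).hasDerivWithinAt) fun x hx => ?_
  rw [interior_Ioi] at hx
  have hnum := two_mul_mul_exp_lt_exp_sq_sub_one (mem_Ioi.1 hx)
  exact div_neg_of_neg_of_pos (by linarith) (pow_pos (hpos x hx) 3)
end

section
/- For λ > 0 and δ ≥ 1, one has -e^{-λ}/2 + Σ_{n=1}^∞ (-1)^{n+1} e^{-λn/δ} = (2e^{-λ/δ} - e^{-λ} - e^{-λ - λ/δ}) / (2(1 + e^{-λ/δ})), and this quantity is nonnegative. -/
/-!
With `q = exp (-λ/δ) ∈ (0, 1)` the series is the geometric series `Σ (-1)ⁿ qⁿ⁺¹ = q / (1 + q)`,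
and the closed form follows by putting `-e^{-λ}/2 + q/(1+q)` over a common denominator.
Nonnegativity amounts to `e^{-λ}(1 + q) ≤ 2q`, which holds because `e^{-λ} ≤ q` (as `δ ≥ 1`)
and `e^{-λ} ≤ 1`.
-/

open Real

theorem hasSum_neg_one_pow_mul_pow_succ {q : ℝ} (hq : |q| < 1) :
    HasSum (fun n : ℕ => (-1 : ℝ) ^ n * q ^ (n + 1)) (q / (1 + q)) := by
  have hterm (n : ℕ) : (-1 : ℝ) ^ n * q ^ (n + 1) = q * (-q) ^ n := by
    rw [neg_pow, pow_succ]
    ring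
  have hgeo := (hasSum_geometric_of_abs_lt_one (by rwa [abs_neg] : |-q| < 1)).mul_left q
  rwa [sub_neg_eq_add, ← div_eq_mul_inv, ← funext hterm] at hgeo

theorem exp_neg_mul_succ_div (lam delta : ℝ) (n : ℕ) :
    exp (-(lam * ((n : ℝ) + 1)) / delta) = exp (-lam / delta) ^ (n + 1) := by
  rw [← exp_nat_mul]
  push_cast
  ring_nf

theorem exp_neg_div_lt_one {lam delta : ℝ} (hlam : 0 < lam) (hdelta : 0 < delta) :
    exp (-lam / delta) < 1 :=
  exp_lt_one_iff.mpr (div_neg_of_neg_of_pos (neg_neg_of_pos hlam) hdelta)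

theorem exp_neg_le_exp_neg_div {lam delta : ℝ} (hlam : 0 ≤ lam) (hdelta : 1 ≤ delta) :
    exp (-lam) ≤ exp (-lam / delta) := by
  rw [exp_le_exp, neg_div, neg_le_neg_iff]
  exact div_le_self hlam hdelta

theorem neg_half_add_div_one_add_eq {e q : ℝ} (hq : 1 + q ≠ 0) :
    -e / 2 + q / (1 + q) = (2 * q - e - e * q) / (2 * (1 + q)) := by
  field_simp
  ring

theorem div_two_mul_one_add_nonneg {e q : ℝ} (hq : 0 ≤ q) (hle : e ≤ q)
    (he1 : e ≤ 1) : 0 ≤ (2 * q - e - e * q) / (2 * (1 + q)) := by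
  have : e * q ≤ q := mul_le_of_le_one_left hq he1
  apply div_nonneg <;> linarith

theorem series_identity_K (lam delta : ℝ) (hlam : 0 < lam) (hdelta : 1 ≤ delta) :
    ∃ S : ℝ,
      HasSum (fun n : ℕ => (-1 : ℝ) ^ n * Real.exp (-(lam * ((n : ℝ) + 1)) / delta)) S ∧
      -Real.exp (-lam) / 2 + S =
        (2 * Real.exp (-lam / delta) - Real.exp (-lam) - Real.exp (-lam - lam / delta)) /
          (2 * (1 + Real.exp (-lam / delta))) ∧
      0 ≤ -Real.exp (-lam) / 2 + S := by
  set q := exp (-lam / delta)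
  have hq0 : 0 < q := exp_pos _
  have hq1 : q < 1 := exp_neg_div_lt_one hlam (by linarith)
  have hsum : HasSum (fun n : ℕ => (-1 : ℝ) ^ n * exp (-(lam * ((n : ℝ) + 1)) / delta))
      (q / (1 + q)) := by
    simp only [exp_neg_mul_succ_div]
    exact hasSum_neg_one_pow_mul_pow_succ (by rw [abs_of_pos hq0]; exact hq1)
  have hexp : exp (-lam - lam / delta) = exp (-lam) * q := by
    rw [← exp_add, sub_eq_add_neg, neg_div]
  have hclosed := neg_half_add_div_one_add_eq (e := exp (-lam)) (by positivity : 1 + q ≠ 0)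
  refine ⟨q / (1 + q), hsum, by rw [hexp, hclosed], ?_⟩
  rw [hclosed]
  exact div_two_mul_one_add_nonneg hq0.le (exp_neg_le_exp_neg_div hlam.le hdelta) (exp_le_one_iff.mpr (by linarith))
end

section
/- For λ > 0 and δ ≥ 1, one has -e^{-λ} + Σ_{n=1}^∞ (λ/δ) e^{-λn/δ} = (-e^{-λ} + e^{-λ-λ/δ} + (λ/δ)e^{-λ/δ}) / (1 - e^{-λ/δ}), and this quantity is nonnegative. -/
/-!
With `x = λ/δ` and `r = e^{-x} < 1` the series is geometric with sum `x r / (1 - r)`, which gives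
the closed form. Its numerator `x r - e^{-λ} (1 - r)` is nonnegative because `1 - r ≤ x`
(from `1 - x ≤ e^{-x}`) and `e^{-λ} ≤ r` (as `x ≤ λ` when `δ ≥ 1`).
-/

open Real

theorem Real.hasSum_exp_neg_mul_succ {x : ℝ} (hx : 0 < x) :
    HasSum (fun n : ℕ => exp (-(x * (n + 1)))) (exp (-x) / (1 - exp (-x))) := by
  have hr : exp (-x) < 1 := exp_lt_one_iff.2 (neg_lt_zero.2 hx)
  rw [div_eq_mul_inv]
  refine ((hasSum_geometric_of_lt_one (exp_pos (-x)).le hr).mul_left (exp (-x))).congr_fun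
    fun n => ?_
  rw [← exp_nat_mul, ← exp_add]
  ring_nf

theorem Real.exp_neg_mul_one_sub_exp_neg_le {x l : ℝ} (hx : 0 ≤ x) (hxl : x ≤ l) :
    exp (-l) * (1 - exp (-x)) ≤ x * exp (-x) := by
  have h_one_sub : 1 - exp (-x) ≤ x := by linarith [one_sub_le_exp_neg x]
  have h_exp : exp (-l) ≤ exp (-x) := exp_le_exp.2 (neg_le_neg hxl)
  have h_nonneg : 0 ≤ 1 - exp (-x) := sub_nonneg.2 (exp_le_one_iff.2 (neg_nonpos.2 hx))
  calc exp (-l) * (1 - exp (-x)) ≤ exp (-x) * x :=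
        mul_le_mul h_exp h_one_sub h_nonneg (exp_pos _).le
    _ = x * exp (-x) := mul_comm _ _

theorem series_identity_L (lam delta : ℝ) (hlam : 0 < lam) (hdelta : 1 ≤ delta) :
    ∃ S : ℝ,
      HasSum (fun n : ℕ => (lam / delta) * Real.exp (-(lam * ((n : ℝ) + 1)) / delta)) S ∧
      -Real.exp (-lam) + S =
        (-Real.exp (-lam) + Real.exp (-lam - lam / delta) +
          (lam / delta) * Real.exp (-lam / delta)) / (1 - Real.exp (-lam / delta)) ∧
      0 ≤ -Real.exp (-lam) + S := by
  have hx : 0 < lam / delta := div_pos hlam (one_pos.trans_le hdelta)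
  have h_exp : exp (-lam - lam / delta) = exp (-lam) * exp (-(lam / delta)) := by
    rw [← exp_add, sub_eq_add_neg]
  set x := lam / delta
  set r := exp (-x)
  have hr : 0 < 1 - r := sub_pos.2 (exp_lt_one_iff.2 (neg_lt_zero.2 hx))
  have h_closed :
      -exp (-lam) + x * (r / (1 - r)) = (-exp (-lam) + exp (-lam) * r + x * r) / (1 - r) := by
    field_simp
    ring
  refine ⟨x * (r / (1 - r)), ?_, ?_, ?_⟩
  · refine ((hasSum_exp_neg_mul_succ hx).mul_left x).congr_fun fun n => ?_
    rw [neg_div, mul_div_right_comm]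
  · rw [neg_div, h_closed, h_exp]
  · rw [h_closed]
    have h_num := exp_neg_mul_one_sub_exp_neg_le hx.le (div_le_self hlam.le hdelta)
    exact div_nonneg (by linarith) hr.le
end

section
/- For λ > 0 and δ ≥ 1, the quantity (1/δ)·((1 - e^{-λ/δ})/((λ/δ)(1 + e^{-λ/δ})) - e^{-λ}/2) is nonnegative and is bounded above by a constant multiple of λ/(1+λ²) uniformly for λ ∈ (0,∞). -/
/-!
Write `F t = (1 - e^{-t}) / (t (1 + e^{-t})) = tanh (t/2) / t`. The elementary bounds
`e^{-t}/2 ≤ F t ≤ min (1/2) (1/t)` give, with `t = λ/δ ≤ λ`, that the error lies between `0` and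
`min (λ/2) (1/λ)`, and `min (λ/2) (1/λ) ≤ 2 λ / (1 + λ²)`.
-/

open Real

/-- `tanhHalfDiv t = tanh (t / 2) / t`. -/
noncomputable def tanhHalfDiv (t : ℝ) : ℝ := (1 - exp (-t)) / (t * (1 + exp (-t)))

noncomputable def bestApproxError (δ lam : ℝ) : ℝ :=
  (1 / δ) * (tanhHalfDiv (lam / δ) - exp (-lam) / 2)

lemma mul_exp_neg_le_one_sub_exp_neg (t : ℝ) : t * exp (-t) ≤ 1 - exp (-t) := by
  have h := mul_le_mul_of_nonneg_right (add_one_le_exp t) (exp_pos (-t)).le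
  rw [← exp_add, add_neg_cancel, exp_zero] at h
  linarith

/-- `tanh s ≤ s` for `s = t / 2 ≥ 0`. -/
lemma two_mul_one_sub_exp_neg_le {t : ℝ} (ht : 0 ≤ t) :
    2 * (1 - exp (-t)) ≤ t * (1 + exp (-t)) := by
  let g : ℝ → ℝ := fun x => x * (1 + exp (-x)) - 2 * (1 - exp (-x))
  have hg : ∀ x, HasDerivAt g (1 - exp (-x) - x * exp (-x)) x := by
    intro x
    have he : HasDerivAt (fun x => exp (-x)) (-exp (-x)) x := by
      simpa using (hasDerivAt_neg x).exp
    exact (((hasDerivAt_id x).mul (he.const_add 1)).sub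
      ((he.const_sub 1).const_mul 2)).congr_deriv (by simp only [id]; ring)
  have hmono : Monotone g :=
    monotone_of_hasDerivAt_nonneg hg fun x => sub_nonneg.mpr (mul_exp_neg_le_one_sub_exp_neg x)
  have := hmono ht
  simp only [g, neg_zero, exp_zero] at this
  linarith

lemma mul_exp_neg_mul_one_add_exp_neg_le {t : ℝ} (ht : 0 ≤ t) :
    t * exp (-t) * (1 + exp (-t)) ≤ 2 * (1 - exp (-t)) := by
  have h_exp_le : exp (-t) ≤ 1 := exp_le_one_iff.mpr (by linarith)
  have h_nonneg : 0 ≤ t * exp (-t) := mul_nonneg ht (exp_pos _).le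
  nlinarith [mul_exp_neg_le_one_sub_exp_neg t]

section tanhHalfDiv

variable {t : ℝ}

lemma exp_neg_div_two_le_tanhHalfDiv (ht : 0 < t) : exp (-t) / 2 ≤ tanhHalfDiv t := by
  rw [tanhHalfDiv, div_le_div_iff₀ two_pos (by positivity)]
  linarith [mul_exp_neg_mul_one_add_exp_neg_le ht.le]

lemma tanhHalfDiv_le_half (ht : 0 < t) : tanhHalfDiv t ≤ 1 / 2 := by
  rw [tanhHalfDiv, div_le_div_iff₀ (by positivity) two_pos]
  linarith [two_mul_one_sub_exp_neg_le ht.le]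

lemma tanhHalfDiv_le_inv (ht : 0 < t) : tanhHalfDiv t ≤ t⁻¹ := by
  rw [tanhHalfDiv, ← one_div, div_le_div_iff₀ (by positivity) ht]
  nlinarith [exp_pos (-t)]

end tanhHalfDiv

section bestApproxError

variable {δ lam : ℝ}

lemma bestApproxError_nonneg (hδ : 1 ≤ δ) (hlam : 0 < lam) : 0 ≤ bestApproxError δ lam := by
  have hδ0 : 0 < δ := one_pos.trans_le hδ
  have h_exp : exp (-lam) ≤ exp (-(lam / δ)) :=
    exp_le_exp.mpr (neg_le_neg (div_le_self hlam.le hδ))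
  have h_lower := exp_neg_div_two_le_tanhHalfDiv (div_pos hlam hδ0)
  exact mul_nonneg (by positivity) (by linarith)

lemma bestApproxError_le_half (hδ : 1 ≤ δ) (hlam : 0 < lam) : bestApproxError δ lam ≤ lam / 2 := by
  have hδ0 : 0 < δ := one_pos.trans_le hδ
  have h_exp : 1 - lam ≤ exp (-lam) := by linarith [add_one_le_exp (-lam)]
  have h_diff : tanhHalfDiv (lam / δ) - exp (-lam) / 2 ≤ lam / 2 := by
    linarith [tanhHalfDiv_le_half (div_pos hlam hδ0)]
  calc bestApproxError δ lam ≤ (1 / δ) * (lam / 2) :=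
        mul_le_mul_of_nonneg_left h_diff (by positivity)
    _ ≤ lam / 2 := mul_le_of_le_one_left (by positivity) ((div_le_one hδ0).mpr hδ)

lemma bestApproxError_le_inv (hδ : 0 < δ) (hlam : 0 < lam) : bestApproxError δ lam ≤ lam⁻¹ := by
  have h_diff : tanhHalfDiv (lam / δ) - exp (-lam) / 2 ≤ (lam / δ)⁻¹ := by
    linarith [tanhHalfDiv_le_inv (div_pos hlam hδ), exp_pos (-lam)]
  calc bestApproxError δ lam ≤ (1 / δ) * (lam / δ)⁻¹ :=
        mul_le_mul_of_nonneg_left h_diff (by positivity)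
    _ = lam⁻¹ := by field_simp

end bestApproxError

lemma min_half_inv_le_two_mul_div {x : ℝ} (hx : 0 < x) :
    min (x / 2) x⁻¹ ≤ 2 * (x / (1 + x ^ 2)) := by
  rw [← mul_div_assoc]
  rcases le_total x 1 with hx1 | hx1
  · refine (min_le_left _ _).trans ?_
    rw [div_le_div_iff₀ two_pos (by positivity)]
    nlinarith
  · refine (min_le_right _ _).trans ?_
    rw [← one_div, div_le_div_iff₀ hx (by positivity)]
    nlinarith

theorem best_approx_error_bound (delta : ℝ) (hdelta : 1 ≤ delta) :
    (∀ lam : ℝ, 0 < lam →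
      0 ≤ (1 / delta) * ((1 - Real.exp (-lam / delta)) /
          ((lam / delta) * (1 + Real.exp (-lam / delta))) - Real.exp (-lam) / 2)) ∧
    ∃ C : ℝ, 0 < C ∧ ∀ lam : ℝ, 0 < lam →
      (1 / delta) * ((1 - Real.exp (-lam / delta)) /
          ((lam / delta) * (1 + Real.exp (-lam / delta))) - Real.exp (-lam) / 2)
        ≤ C * (lam / (1 + lam ^ 2)) := by
  simp only [neg_div]
  change (∀ lam : ℝ, 0 < lam → 0 ≤ bestApproxError delta lam) ∧
    ∃ C : ℝ, 0 < C ∧ ∀ lam : ℝ, 0 < lam → bestApproxError delta lam ≤ C * (lam / (1 + lam ^ 2))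
  refine ⟨fun lam hlam => bestApproxError_nonneg hdelta hlam,
    2, two_pos, fun lam hlam => ?_⟩
  calc bestApproxError delta lam
      ≤ min (lam / 2) lam⁻¹ :=
        le_min (bestApproxError_le_half hdelta hlam)
          (bestApproxError_le_inv (one_pos.trans_le hdelta) hlam)
    _ ≤ 2 * (lam / (1 + lam ^ 2)) := min_half_inv_le_two_mul_div hlam
end

section
/- For all real λ, w with λ ≥ 0 and w ≥ 0, e^λ(1/(e^{λ+w}-1) - (λ+w)/(e^{λ+w}-1)² + (1+λ-e^λ)/(e^λ-1)²) ≤ 0, where for λ = 0 or λ+w = 0 the expressions are interpreted by their limits. -/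
/-!
Writing `F x = (eˣ - 1 - x) / (eˣ - 1)²`, the left-hand side is `e^λ (F (λ + w) - F λ)`, so it
suffices that `F` decreases on `(0, ∞)`. Indeed `F' x = -(e²ˣ - 2x eˣ - 1) / (eˣ - 1)³`, and
`e²ˣ - 2x eˣ - 1 = 2 eˣ (sinh x - x) > 0` for `x > 0`.
-/

open Real Set

noncomputable def expRemainderRatio (x : ℝ) : ℝ := (exp x - 1 - x) / (exp x - 1) ^ 2

lemma exp_sub_one_ne_zero {x : ℝ} (hx : x ≠ 0) : exp x - 1 ≠ 0 :=
  sub_ne_zero.mpr (exp_eq_one_iff x |>.not.mpr hx)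

lemma one_div_exp_sub_one_sub_div_sq {x : ℝ} (hx : x ≠ 0) :
    1 / (exp x - 1) - x / (exp x - 1) ^ 2 = expRemainderRatio x := by
  have := exp_sub_one_ne_zero hx
  rw [expRemainderRatio]
  field_simp

lemma exp_sq_sub_two_mul_mul_exp_sub_one_pos {x : ℝ} (hx : 0 < x) :
    0 < exp x ^ 2 - 2 * x * exp x - 1 := by
  have hsinh : x < sinh x := self_lt_sinh_iff.mpr hx
  have hfactor : exp x ^ 2 - 2 * x * exp x - 1 = 2 * exp x * (sinh x - x) := by
    rw [sinh_eq, exp_neg]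
    field_simp
    ring
  rw [hfactor]
  exact mul_pos (by positivity) (sub_pos.mpr hsinh)

lemma hasDerivAt_expRemainderRatio {x : ℝ} (hx : x ≠ 0) :
    HasDerivAt expRemainderRatio
      (-(exp x ^ 2 - 2 * x * exp x - 1) / (exp x - 1) ^ 3) x := by
  have hne := exp_sub_one_ne_zero hx
  have hnum : HasDerivAt (fun y ↦ exp y - 1 - y) (exp x - 1) x := by
    simpa using ((hasDerivAt_exp x).sub_const 1).fun_sub (hasDerivAt_id x)
  have hden : HasDerivAt (fun y ↦ (exp y - 1) ^ 2) (2 * (exp x - 1) * exp x) x := by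
    simpa using ((hasDerivAt_exp x).sub_const 1).fun_pow 2
  refine (hnum.div hden (pow_ne_zero 2 hne)).congr_deriv ?_
  field_simp
  ring

lemma strictAntiOn_expRemainderRatio : StrictAntiOn expRemainderRatio (Ioi 0) := by
  refine strictAntiOn_of_hasDerivWithinAt_neg (convex_Ioi 0)
    (f' := fun x ↦ -(exp x ^ 2 - 2 * x * exp x - 1) / (exp x - 1) ^ 3)
    (fun x hx ↦ (hasDerivAt_expRemainderRatio (ne_of_gt hx)).continuousAt.continuousWithinAt)
    (fun x hx ↦ ?_) (fun x hx ↦ ?_)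
  · rw [interior_Ioi] at hx
    exact (hasDerivAt_expRemainderRatio (ne_of_gt hx)).hasDerivWithinAt
  · rw [interior_Ioi] at hx
    have hpos : 0 < exp x - 1 := sub_pos.mpr (one_lt_exp_iff.mpr hx)
    exact div_neg_of_neg_of_pos (neg_neg_of_pos (exp_sq_sub_two_mul_mul_exp_sub_one_pos hx))
      (pow_pos hpos 3)

theorem gB_lambda_deriv_nonpos (lam w : ℝ) (hlam : 0 < lam) (hw : 0 < w) :
    Real.exp lam * (1 / (Real.exp (lam + w) - 1)
      - (lam + w) / (Real.exp (lam + w) - 1) ^ 2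
      + (1 + lam - Real.exp lam) / (Real.exp lam - 1) ^ 2) ≤ 0 := by
  have hsum : 0 < lam + w := by positivity
  have hrewrite : 1 / (exp (lam + w) - 1) - (lam + w) / (exp (lam + w) - 1) ^ 2
      + (1 + lam - exp lam) / (exp lam - 1) ^ 2
      = expRemainderRatio (lam + w) - expRemainderRatio lam := by
    have hlam_term : (1 + lam - exp lam) / (exp lam - 1) ^ 2 = -expRemainderRatio lam := by
      rw [expRemainderRatio, ← neg_div]
      ring_nf
    rw [one_div_exp_sub_one_sub_div_sq hsum.ne', hlam_term, sub_eq_add_neg]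
  have hdecr : expRemainderRatio (lam + w) < expRemainderRatio lam :=
    strictAntiOn_expRemainderRatio hlam hsum (by linarith)
  rw [hrewrite]
  exact mul_nonpos_of_nonneg_of_nonpos (exp_pos lam).le (by linarith)
end
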